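/- In a one-one-LQ instance in which every stable matching is feasible, for any k with k ≤ s (s the size of a stable matching) there exists a feasible relaxed stable matching of size at least k; and no feasible relaxed stable matching has size exceeding 2s. -/

import Mathlib

/-- `BetterThan pref acc o` : a fixed alternative is strictly preferred over the optional
current partner `o`. Being unmatched (`none`, i.e. ⊥) is least preferred, so any
acceptable alternative (`acc`) beats it; against `some x` we use `pref x`. -/
def BetterThan {α : Type*} (pref : α → Prop) (acc : Prop) : Option α → Prop
  | none => acc
  | some x => pref x

/-- A one-to-one matching between agents `A` and resources `B`, given by mutually
consistent partial partner maps. -/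
structure Matching (A B : Type*) where
  mA : A → Option B
  mB : B → Option A
  consistent : ∀ a b, mA a = some b ↔ mB b = some a

/-- The matching only uses mutually acceptable pairs (edges of the instance). -/
def Matching.RespectsE {A B : Type*} (E : A → B → Prop) (M : Matching A B) : Prop :=
  ∀ a b, M.mA a = some b → E a b

/-- Number of matched agents, i.e. the size of the matching. -/
noncomputable def Matching.size {A B : Type*} (M : Matching A B) : ℕ :=
  Nat.card {a : A // (M.mA a).isSome}

/-- `(a,b)` is a blocking pair for `M`: an acceptable pair not in `M` where both sides
strictly prefer each other over their current assignment. -/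
def Blocking {A B : Type*} (E : A → B → Prop) (prefA : A → B → B → Prop)
    (prefB : B → A → A → Prop) (M : Matching A B) (a : A) (b : B) : Prop :=
  E a b ∧ M.mA a ≠ some b ∧
    BetterThan (prefA a b) (E a b) (M.mA a) ∧ BetterThan (prefB b a) (E a b) (M.mB b)

/-- Stability: no blocking pair. -/
def Stable {A B : Type*} (E : A → B → Prop) (prefA : A → B → B → Prop)
    (prefB : B → A → A → Prop) (M : Matching A B) : Prop :=
  ∀ a b, ¬ Blocking E prefA prefB M a b

/-- Agent `a` has justified envy towards agent `a'`, matched to some resource `b`. -/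
def Envies {A B : Type*} (E : A → B → Prop) (prefA : A → B → B → Prop)
    (prefB : B → A → A → Prop) (M : Matching A B) (a a' : A) : Prop :=
  ∃ b, M.mA a' = some b ∧ E a b ∧ BetterThan (prefA a b) (E a b) (M.mA a) ∧ prefB b a a'

/-- Envy-freeness: no envy pair. -/
def EnvyFree {A B : Type*} (E : A → B → Prop) (prefA : A → B → B → Prop)
    (prefB : B → A → A → Prop) (M : Matching A B) : Prop :=
  ∀ a a', ¬ Envies E prefA prefB M a a'

/-- Feasibility: every lower-quota resource is matched. -/
def Feasible {A B : Type*} (lq : B → Prop) (M : Matching A B) : Prop :=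
  ∀ b, lq b → (M.mB b).isSome

/-- Relaxed stability: every agent participating in a blocking pair is matched,
and matched to a lower-quota resource. -/
def RelaxedStable {A B : Type*} (E : A → B → Prop) (prefA : A → B → B → Prop)
    (prefB : B → A → A → Prop) (lq : B → Prop) (M : Matching A B) : Prop :=
  ∀ a b, Blocking E prefA prefB M a b → ∃ b', M.mA a = some b' ∧ lq b'

/-- Strict preference lists: each vertex has an irreflexive, transitive, total order
over its neighbours, and preferences are only over neighbours. -/
structure StrictPrefs {A B : Type*} (E : A → B → Prop) (prefA : A → B → B → Prop)
    (prefB : B → A → A → Prop) : Prop where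
  irreflA : ∀ a b, ¬ prefA a b b
  transA : ∀ a b₁ b₂ b₃, prefA a b₁ b₂ → prefA a b₂ b₃ → prefA a b₁ b₃
  totalA : ∀ a b b', E a b → E a b' → b ≠ b' → prefA a b b' ∨ prefA a b' b
  memA : ∀ a b b', prefA a b b' → E a b ∧ E a b'
  irreflB : ∀ b a, ¬ prefB b a a
  transB : ∀ b a₁ a₂ a₃, prefB b a₁ a₂ → prefB b a₂ a₃ → prefB b a₁ a₃
  totalB : ∀ b a a', E a b → E a' b → a ≠ a' → prefB b a a' ∨ prefB b a' a
  memB : ∀ b a a', prefB b a a' → E a b ∧ E a' b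

/-!
A stable matching is maximal: an acceptable pair with both sides unmatched would block it.
Hence `Ms` itself witnesses the lower bound, and every edge of any matching `M` has an endpoint
matched in `Ms`. The agents of `M` matched in `Ms` number at most `s`; each remaining agent is
sent injectively, through its resource in `M`, to that resource's partner in `Ms`, so at most
`s` more. Thus `|M| ≤ 2s`.
-/

namespace Matching

variable {A B : Type*}

theorem eq_of_mA_eq_some (M : Matching A B) {a a' : A} {b : B} (h : M.mA a = some b)
    (h' : M.mA a' = some b) : a = a' :=
  Option.some_injective _ (((M.consistent a b).mp h).symm.trans ((M.consistent a' b).mp h'))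

theorem size_eq_ncard (M : Matching A B) : M.size = {a | (M.mA a).isSome}.ncard :=
  rfl

/-- The `N`-partner of the `M`-partner of `a`; junk value `a` when either is missing. -/
def partnerVia (M N : Matching A B) (a : A) : A :=
  ((M.mA a).bind N.mB).getD a

theorem partnerVia_spec (M N : Matching A B) {a : A} {b : B} (hM : M.mA a = some b)
    (hN : (N.mB b).isSome) : N.mA (M.partnerVia N a) = some b := by
  obtain ⟨x, hx⟩ := Option.isSome_iff_exists.mp hN
  rw [partnerVia, hM, Option.bind_some, hx, Option.getD_some]
  exact (N.consistent x b).mpr hx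

theorem size_le_two_mul_size_of_cover [Finite A] (M N : Matching A B)
    (hcover : ∀ a b, M.mA a = some b → (N.mA a).isSome ∨ (N.mB b).isSome) :
    M.size ≤ 2 * N.size := by
  set S := {a | (M.mA a).isSome}
  set T := {a | (N.mA a).isSome}
  have hpartner : ∀ a ∈ S \ T, ∃ b, M.mA a = some b ∧ N.mA (M.partnerVia N a) = some b := by
    rintro a ⟨haS, haT⟩
    obtain ⟨b, hb⟩ := Option.isSome_iff_exists.mp haS
    exact ⟨b, hb, M.partnerVia_spec N hb ((hcover a b hb).resolve_left haT)⟩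
  have hdiff : (S \ T).ncard ≤ T.ncard := by
    refine Set.ncard_le_ncard_of_injOn (M.partnerVia N) ?_ ?_ (Set.toFinite T)
    · intro a ha
      obtain ⟨b, -, hb⟩ := hpartner a ha
      simp [T, hb]
    · intro a ha a' ha' heq
      obtain ⟨b, hab, hb⟩ := hpartner a ha
      obtain ⟨b', hab', hb'⟩ := hpartner a' ha'
      rw [heq, hb'] at hb
      cases hb
      exact M.eq_of_mA_eq_some hab hab'
  calc M.size = (S ∩ T).ncard + (S \ T).ncard := by
        rw [size_eq_ncard, Set.ncard_inter_add_ncard_sdiff_eq_ncard]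
    _ ≤ T.ncard + T.ncard := add_le_add (Set.ncard_le_ncard Set.inter_subset_right) hdiff
    _ = 2 * N.size := by rw [size_eq_ncard]; ring

end Matching

section

variable {A B : Type*} {E : A → B → Prop} {prefA : A → B → B → Prop}
  {prefB : B → A → A → Prop} {M : Matching A B}

theorem Stable.relaxedStable (lq : B → Prop) (hM : Stable E prefA prefB M) :
    RelaxedStable E prefA prefB lq M :=
  fun a b hab => absurd hab (hM a b)

theorem Stable.isSome_mA_or_isSome_mB (hM : Stable E prefA prefB M) {a : A} {b : B}
    (hab : E a b) : (M.mA a).isSome ∨ (M.mB b).isSome := by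
  by_contra! h
  simp only [Bool.not_eq_true, Option.isSome_eq_false_iff, Option.isNone_iff_eq_none] at h
  exact hM a b ⟨hab, by simp [h.1], by rw [h.1]; exact hab, by rw [h.2]; exact hab⟩

end

theorem relaxedStable_size_bounds_general {A B : Type*} [Fintype A] (E : A → B → Prop)
    (prefA : A → B → B → Prop) (prefB : B → A → A → Prop) (lq : B → Prop)
    (Ms : Matching A B)
    (hMs : Ms.RespectsE E) (hstable : Stable E prefA prefB Ms)
    (hfeas : ∀ N : Matching A B, N.RespectsE E → Stable E prefA prefB N →
      Feasible lq N) :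
    (∀ k : ℕ, k ≤ Ms.size → ∃ M : Matching A B, M.RespectsE E ∧ Feasible lq M ∧
      RelaxedStable E prefA prefB lq M ∧ k ≤ M.size) ∧
    (∀ M : Matching A B, M.RespectsE E → Feasible lq M →
      RelaxedStable E prefA prefB lq M → M.size ≤ 2 * Ms.size) :=
  ⟨fun _ hk => ⟨Ms, hMs, hfeas Ms hMs hstable, hstable.relaxedStable lq, hk⟩,
    fun M hME _ _ => M.size_le_two_mul_size_of_cover Ms fun a b hab =>
      hstable.isSome_mA_or_isSome_mB (hME a b hab)⟩

/-- in an instance where every stable matching is feasible, for every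
k ≤ s (s the size of a stable matching) there is a feasible relaxed stable matching
of size at least k, and every feasible relaxed stable matching has size at most 2s. -/
theorem relaxedStable_size_bounds {A B : Type*} [Fintype A] (E : A → B → Prop)
    (prefA : A → B → B → Prop) (prefB : B → A → A → Prop) (lq : B → Prop)
    (Ms : Matching A B) (hsp : StrictPrefs E prefA prefB)
    (hMs : Ms.RespectsE E) (hstable : Stable E prefA prefB Ms)
    (hfeas : ∀ N : Matching A B, N.RespectsE E → Stable E prefA prefB N →
      Feasible lq N) :
    (∀ k : ℕ, k ≤ Ms.size → ∃ M : Matching A B, M.RespectsE E ∧ Feasible lq M ∧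
      RelaxedStable E prefA prefB lq M ∧ k ≤ M.size) ∧
    (∀ M : Matching A B, M.RespectsE E → Feasible lq M →
      RelaxedStable E prefA prefB lq M → M.size ≤ 2 * Ms.size) :=
  relaxedStable_size_bounds_general E prefA prefB lq Ms hMs hstable hfeas
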